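/- Let x ∈ W_T (type affine SL₂) with positive level. Then the length positive set LP(x) is connected in the quantum Bruhat graph by edges of the form w → w s_i with s_i a simple reflection: if |LP(x)| = 2 then LP(x) = {w, ws_i} for some w ∈ W and i ∈ {0,1}, and if |LP(x)| = 3 then LP(x) = {w, ws_i, ws_i s_j} with i ≠ j. -/
import Mathlib


/-! A concrete model of the Weyl group of affine SL₂ (the infinite dihedral group),
its affine real roots, its coweight lattice, the double affine Weyl semigroup
`W_T = W ⋉ T`, the length functional and length positive sets, and the quantum
Bruhat graph `QBG(W)` with its paths, weights and distances. -/

namespace SL2hat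

/-- An element `w₀ τ^{t·α∨}` of the infinite dihedral Weyl group `W` of affine SL₂;
`eps = true` means `w₀ = s₁`. -/
structure D where
  eps : Bool
  t : ℤ
deriving DecidableEq

/-- Multiplication in `W` (using `τ^{t} s₁ = s₁ τ^{-t}`). -/
def dmul (a b : D) : D := ⟨xor a.eps b.eps, (if b.eps then -a.t else a.t) + b.t⟩

/-- The identity element `e`. -/
def done : D := ⟨false, 0⟩

/-- Inversion in `W`. -/
def dinv (a : D) : D := ⟨a.eps, if a.eps then a.t else -a.t⟩

/-- The simple reflection `s₁`. -/
def s1 : D := ⟨true, 0⟩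

/-- The simple reflection `s₀ = s₁ τ^{-α∨}`. -/
def s0 : D := ⟨true, -1⟩

/-- The translation `τ^{t·α∨}`. -/
def tau (t : ℤ) : D := ⟨false, t⟩

/-- The length function `ℓ` of the infinite dihedral group. -/
def len (a : D) : ℤ := if a.eps then (if 0 ≤ a.t then 2*a.t+1 else -(2*a.t)-1) else 2*|a.t|

/-- A real affine root `c·α + n·δ` of affine SL₂ (with `c = ±1`). -/
structure R where
  c : ℤ
  n : ℤ
deriving DecidableEq

/-- Positivity of roots: `Φ⁺ = {sgn(n)(α + nδ) : n ∈ ℤ}`. -/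
def R.pos (β : R) : Prop := (β.c = 1 ∧ 0 ≤ β.n) ∨ (β.c = -1 ∧ 1 ≤ β.n)

/-- Negation of a root. -/
def rneg (β : R) : R := ⟨-β.c, -β.n⟩

/-- The simple root `α̃₁ = α`. -/
def alpha1 : R := ⟨1, 0⟩

/-- The simple root `α̃₀ = -α + δ`. -/
def alpha0 : R := ⟨-1, 1⟩

/-- The simple (affine) roots. -/
def R.simple (β : R) : Prop := β = alpha1 ∨ β = alpha0

/-- The reflection `s_β ∈ W` associated to the real root `β` (so `s_{α+nδ} = (true, n)`). -/
def refl (β : R) : D := ⟨true, β.c * β.n⟩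

/-- The action of `W` on the real roots: `w₀τ^λ(α + nδ) = w₀α + (n − ⟨α, λ⟩)δ`. -/
def ract (g : D) (β : R) : R := ⟨if g.eps then -β.c else β.c, β.n - 2 * g.t * β.c⟩

/-- `⟨2ρ, β∨⟩ = 2·ht(β)` for a real root `β = cα + nδ` (of height `c + 2n`). -/
def tworho (β : R) : ℤ := 2*β.c + 4*β.n

/-- A coweight `k·α∨ + m·δ + l·Λ₀`. -/
structure P where
  k : ℤ
  m : ℤ
  l : ℤ
deriving DecidableEq

/-- The zero coweight. -/
def pzero : P := ⟨0, 0, 0⟩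

/-- Addition of coweights. -/
def padd (μ ν : P) : P := ⟨μ.k+ν.k, μ.m+ν.m, μ.l+ν.l⟩

/-- Subtraction of coweights. -/
def psub (μ ν : P) : P := ⟨μ.k-ν.k, μ.m-ν.m, μ.l-ν.l⟩

/-- The coroot `β∨ = c·α∨ + n·δ` of the real root `β = c·α + n·δ`. -/
def coroot (β : R) : P := ⟨β.c, β.n, 0⟩

/-- The pairing `⟨β, μ⟩` between roots and coweights. -/
def pairing (β : R) (μ : P) : ℤ := 2*β.c*μ.k + β.n*μ.l

/-- The action of `W` on coweights:
`w₀τ^λ(μ₀ + mδ + lΛ₀) = w₀μ₀ + l·w₀λ + (m − ⟨μ₀,λ⟩ − (l/2)⟨λ,λ⟩)δ + lΛ₀`. -/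
def pact (g : D) (μ : P) : P :=
  ⟨(if g.eps then -1 else 1) * (μ.k + μ.l * g.t), μ.m - 2*μ.k*g.t - μ.l * g.t^2, μ.l⟩

/-- An element `w ε^μ` of the double affine Weyl semigroup `W_T`. -/
structure WT where
  w : D
  mu : P

/-- The level of `x = w ε^{kα∨ + mδ + lΛ₀}` is `l`. -/
def WT.lev (x : WT) : ℤ := x.mu.l

/-- Membership of a coweight in the (integral) Tits cone `T`. -/
def inTits (μ : P) : Prop := 0 < μ.l ∨ (μ.l = 0 ∧ μ.k = 0)

/-- The product in `W_T`: `(w ε^μ)(w' ε^{μ'}) = ww' ε^{(w')⁻¹μ + μ'}`. -/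
def wtmul (x y : WT) : WT := ⟨dmul x.w y.w, padd (pact (dinv y.w) x.mu) y.mu⟩

/-- Indicator function of a proposition (e.g. `Φ⁺(·)`). -/
noncomputable def ind (p : Prop) : ℤ := @ite _ p (Classical.dec p) 1 0

/-- The length functional `ℓ(x, β) = ⟨β, μ⟩ + Φ⁺(β) − Φ⁺(wβ)` for `x = w ε^μ`. -/
noncomputable def lfun (x : WT) (β : R) : ℤ :=
  pairing β x.mu + ind β.pos - ind (ract x.w β).pos

/-- The length positive set `LP(x) = {v ∈ W : ℓ(x, vβ) ≥ 0 for all β ∈ Φ⁺}`. -/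
def LP (x : WT) : Set D := {v : D | ∀ β : R, β.pos → 0 ≤ lfun x (ract v β)}

/-- An edge of the quantum Bruhat graph from `u` to `v = u s_β`, `β ∈ Φ⁺`:
either a Bruhat edge (`ℓ(v) = ℓ(u) + 1`) or a quantum edge
(`ℓ(v) = ℓ(u) + 1 − ⟨2ρ, β∨⟩`). -/
structure Edge (u v : D) where
  β : R
  hpos : β.pos
  hv : v = dmul u (refl β)
  cond : len v = len u + 1 ∨ len v = len u + 1 - tworho β

/-- The weight of an edge: `0` for a Bruhat edge, `β∨` for a quantum edge. -/
def Edge.wt {u v : D} (e : Edge u v) : P :=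
  if len v = len u + 1 then pzero else coroot e.β

/-- A path in the quantum Bruhat graph. -/
inductive Path : D → D → Type
  | nil (u : D) : Path u u
  | cons {u v w : D} (e : Edge u v) (p : Path v w) : Path u w

/-- The length (number of edges) of a path. -/
def Path.length : ∀ {u v : D}, Path u v → ℕ
  | _, _, .nil _ => 0
  | _, _, .cons _ p => p.length + 1

/-- The total weight of a path. -/
def Path.wt : ∀ {u v : D}, Path u v → P
  | _, _, .nil _ => pzero
  | _, _, .cons e p => padd e.wt p.wt

/-- A path is shortest if no path between the same endpoints has fewer edges. -/
def Shortest {u v : D} (p : Path u v) : Prop := ∀ q : Path u v, p.length ≤ q.length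

/-- The distance `d(u ⇒ v)` in `QBG(W)`. -/
noncomputable def dist (u v : D) : ℕ := sInf {n | ∃ p : Path u v, p.length = n}

/-- The Bruhat order on `W`, generated by `a < a·s_β` whenever `β ∈ Φ⁺` and
`ℓ(a) < ℓ(a·s_β)`. -/
def bruhatLE : D → D → Prop :=
  Relation.ReflTransGen (fun a b => (∃ β : R, β.pos ∧ b = dmul a (refl β)) ∧ len a < len b)

/-- `w` is left-sided if `s₁ w > w` (the identity is both left- and right-sided). -/
def leftSided (w : D) : Prop := len w < len (dmul s1 w)

/-- `w` is right-sided if `s₀ w > w`. -/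
def rightSided (w : D) : Prop := len w < len (dmul s0 w)

/-- Two elements are same-sided if both are left-sided or both are right-sided. -/
def sameSided (u v : D) : Prop := (leftSided u ∧ leftSided v) ∨ (rightSided u ∧ rightSided v)

/-- The set `M_{x,y}` of distance minimising pairs
`(u,v) ∈ LP(x) × LP(y)` for `d(u ⇒ w_y v)`. -/
noncomputable def M (x y : WT) : Set (D × D) :=
  {uv | uv.1 ∈ LP x ∧ uv.2 ∈ LP y ∧
    ∀ u' v' : D, u' ∈ LP x → v' ∈ LP y →
      dist uv.1 (dmul y.w uv.2) ≤ dist u' (dmul y.w v')}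

/-- Schremmer's formula `x *_{u,v}^p y = w_x u v⁻¹ ε^{v u⁻¹ μ_x + μ_y − v·wt(p)}`. -/
def demFormula (x y : WT) (u v : D) (p : Path u (dmul y.w v)) : WT :=
  ⟨dmul x.w (dmul u (dinv v)),
    psub (padd (pact (dmul v (dinv u)) x.mu) y.mu) (pact v p.wt)⟩

end SL2hat

namespace SL2hat

section Aux

lemma ind_nonneg (p : Prop) : 0 ≤ ind p := by unfold ind; split <;> norm_num

lemma ind_le_one (p : Prop) : ind p ≤ 1 := by unfold ind; split <;> norm_num

lemma ind_eq_one {p : Prop} (h : p) : ind p = 1 := by unfold ind; exact if_pos h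

lemma ind_eq_zero {p : Prop} (h : ¬p) : ind p = 0 := by unfold ind; exact if_neg h

lemma ind_mono {p q : Prop} (h : p → q) : ind p ≤ ind q := by
  by_cases hp : p
  · rw [ind_eq_one hp, ind_eq_one (h hp)]
  · rw [ind_eq_zero hp]; exact ind_nonneg q

lemma pos_iff_l (m : ℤ) : R.pos ⟨1, m⟩ ↔ 0 ≤ m := by
  show (1 = 1 ∧ 0 ≤ m) ∨ ((1:ℤ) = -1 ∧ 1 ≤ m) ↔ 0 ≤ m
  omega

lemma pos_iff_r (m : ℤ) : R.pos ⟨-1, m⟩ ↔ 1 ≤ m := by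
  show ((-1:ℤ) = 1 ∧ 0 ≤ m) ∨ ((-1:ℤ) = -1 ∧ 1 ≤ m) ↔ 1 ≤ m
  omega

lemma pos_mono {c n n' : ℤ} (h : n ≤ n') (hp : R.pos ⟨c, n⟩) : R.pos ⟨c, n'⟩ := by
  rcases hp with ⟨hc, hn⟩ | ⟨hc, hn⟩
  · exact Or.inl ⟨hc, hn.trans h⟩
  · exact Or.inr ⟨hc, hn.trans h⟩

end Aux
section Mem

lemma ract_eval (ε : Bool) (t c n : ℤ) :
    ract ⟨ε, t⟩ ⟨c, n⟩ = ⟨if ε then -c else c, n - 2 * t * c⟩ := rfl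

lemma lfun_eval (x : WT) (c n : ℤ) :
    lfun x ⟨c, n⟩ = 2 * c * x.mu.k + n * x.mu.l
      + ind (R.pos ⟨c, n⟩) - ind (R.pos (ract x.w ⟨c, n⟩)) := rfl

/-- comparison: raising the `δ`-coefficient raises `lfun` up to `-1`. -/
lemma lfun_ge (x : WT) (c n n' : ℤ) (h : n ≤ n') :
    lfun x ⟨c, n⟩ + (n' - n) * x.mu.l - 1 ≤ lfun x ⟨c, n'⟩ := by
  rw [lfun_eval, lfun_eval]
  have h1 : ind (R.pos ⟨c, n⟩) ≤ ind (R.pos ⟨c, n'⟩) := ind_mono (pos_mono h)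
  have h2 : ind (R.pos (ract x.w ⟨c, n'⟩)) ≤ 1 := ind_le_one _
  have h3 : 0 ≤ ind (R.pos (ract x.w ⟨c, n⟩)) := ind_nonneg _
  nlinarith [h1, h2, h3]

lemma ract_a1 (ε : Bool) (t : ℤ) :
    ract ⟨ε, t⟩ alpha1 = ⟨if ε then -1 else 1, -(2*t)⟩ := by
  cases ε <;> (simp [ract_eval, alpha1]; try ring)

lemma ract_a0 (ε : Bool) (t : ℤ) :
    ract ⟨ε, t⟩ alpha0 = ⟨if ε then 1 else -1, 1 + 2*t⟩ := by
  cases ε <;> (simp [ract_eval, alpha0]; try ring) <;> ring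

theorem mem_LP_iff (x : WT) (hl : 0 < x.mu.l) (v : D) :
    v ∈ LP x ↔ 0 ≤ lfun x (ract v alpha1) ∧ 0 ≤ lfun x (ract v alpha0) := by
  constructor
  · intro h
    exact ⟨h alpha1 (Or.inl ⟨rfl, le_refl 0⟩), h alpha0 (Or.inr ⟨rfl, le_refl 1⟩)⟩
  · rintro ⟨h1, h0⟩ ⟨c, n⟩ hpos
    obtain ⟨ε, t⟩ := v
    rw [ract_a1] at h1
    rw [ract_a0] at h0
    rcases hpos with ⟨hc, hn⟩ | ⟨hc, hn⟩
    · have hc' : c = 1 := hc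
      have hn' : (0:ℤ) ≤ n := hn
      subst hc'
      have hgoal : ract ⟨ε, t⟩ (⟨1, n⟩ : R) = ⟨if ε then -1 else 1, n - 2*t⟩ := by
        cases ε <;> (simp [ract_eval]; try ring)
      rw [hgoal]
      rcases eq_or_lt_of_le hn' with he | hlt
      · rw [← he]; convert h1 using 3; omega
      · have key := lfun_ge x (if ε then (-1:ℤ) else 1) (-(2*t)) (n - 2*t) (by omega)
        have hnl : 1 * x.mu.l ≤ n * x.mu.l :=
          mul_le_mul_of_nonneg_right (by omega) hl.le
        nlinarith [key, h1, hnl]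
    · have hc' : c = -1 := hc
      have hn' : (1:ℤ) ≤ n := hn
      subst hc'
      have hgoal : ract ⟨ε, t⟩ (⟨-1, n⟩ : R) = ⟨if ε then 1 else -1, n + 2*t⟩ := by
        cases ε <;> (simp [ract_eval]; try ring) <;> ring
      rw [hgoal]
      rcases eq_or_lt_of_le hn' with he | hlt
      · rw [← he]; exact h0
      · have key := lfun_ge x (if ε then (1:ℤ) else -1) (1 + 2*t) (n + 2*t) (by omega)
        have hnl : 1 * x.mu.l ≤ (n - 1) * x.mu.l :=
          mul_le_mul_of_nonneg_right (by omega) hl.le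
        nlinarith [key, h0, hnl]

end Mem
section Bounds

lemma LP_false_bounds (x : WT) (hl : 0 < x.mu.l) (t X : ℤ)
    (hX : X = x.mu.k - t * x.mu.l) (h : (⟨false, t⟩ : D) ∈ LP x) :
    0 ≤ X ∧ 2*X ≤ x.mu.l + 1 ∧ (2*X = x.mu.l + 1 → 0 ≤ t) := by
  rw [mem_LP_iff x hl] at h
  obtain ⟨h1, h0⟩ := h
  rw [ract_a1] at h1; rw [ract_a0] at h0
  norm_num at h1 h0
  rw [lfun_eval] at h1 h0
  have i1 := ind_le_one (R.pos ⟨1, -(2*t)⟩)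
  have i2 := ind_nonneg (R.pos (ract x.w ⟨1, -(2*t)⟩))
  have i3 := ind_le_one (R.pos ⟨-1, 1+2*t⟩)
  have i4 := ind_nonneg (R.pos (ract x.w ⟨-1, 1+2*t⟩))
  have hA : -1 ≤ 2*X := by nlinarith [h1]
  have hB : 2*X ≤ x.mu.l + 1 := by nlinarith [h0]
  refine ⟨by omega, hB, ?_⟩
  intro heq
  by_contra ht
  have hi3 : ind (R.pos ⟨-1, 1+2*t⟩) = 0 := by
    apply ind_eq_zero; rw [pos_iff_r]; omega
  rw [hi3] at h0
  nlinarith [h0]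

lemma LP_true_bounds (x : WT) (hl : 0 < x.mu.l) (u X : ℤ)
    (hX : X = -x.mu.k - u * x.mu.l) (h : (⟨true, u⟩ : D) ∈ LP x) :
    0 ≤ X ∧ 2*X ≤ x.mu.l + 1 ∧ (2*X = x.mu.l + 1 → 0 ≤ u) := by
  rw [mem_LP_iff x hl] at h
  obtain ⟨h1, h0⟩ := h
  rw [ract_a1] at h1; rw [ract_a0] at h0
  norm_num at h1 h0
  rw [lfun_eval] at h1 h0
  have i1 := ind_le_one (R.pos ⟨-1, -(2*u)⟩)
  have i2 := ind_nonneg (R.pos (ract x.w ⟨-1, -(2*u)⟩))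
  have i3 := ind_le_one (R.pos ⟨1, 1+2*u⟩)
  have i4 := ind_nonneg (R.pos (ract x.w ⟨1, 1+2*u⟩))
  have hA : -1 ≤ 2*X := by nlinarith [h1]
  have hB : 2*X ≤ x.mu.l + 1 := by nlinarith [h0]
  refine ⟨by omega, hB, ?_⟩
  intro heq
  by_contra hu
  have hi3 : ind (R.pos ⟨1, 1+2*u⟩) = 0 := by
    apply ind_eq_zero; rw [pos_iff_l]; omega
  rw [hi3] at h0
  nlinarith [h0]

lemma LP_mem_false (x : WT) (t : ℤ) (hl1 : x.mu.l = 1)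
    (hk : x.mu.k - t * x.mu.l = 0) (ht : t ≤ 0) : (⟨false, t⟩ : D) ∈ LP x := by
  rw [mem_LP_iff x (by omega)]
  rw [ract_a1, ract_a0]
  norm_num
  rw [lfun_eval, lfun_eval]
  have i1 : ind (R.pos ⟨1, -(2*t)⟩) = 1 := by
    apply ind_eq_one; rw [pos_iff_l]; omega
  have i2 := ind_le_one (R.pos (ract x.w ⟨1, -(2*t)⟩))
  have i3 := ind_nonneg (R.pos ⟨-1, 1+2*t⟩)
  have i4 := ind_le_one (R.pos (ract x.w ⟨-1, 1+2*t⟩))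
  constructor
  · nlinarith [i1, i2]
  · nlinarith [i3, i4]

lemma LP_mem_true (x : WT) (u : ℤ) (hl1 : x.mu.l = 1)
    (hk : x.mu.k + u * x.mu.l = 0) (hu : u ≤ -1) : (⟨true, u⟩ : D) ∈ LP x := by
  rw [mem_LP_iff x (by omega)]
  rw [ract_a1, ract_a0]
  norm_num
  rw [lfun_eval, lfun_eval]
  have i1 : ind (R.pos ⟨-1, -(2*u)⟩) = 1 := by
    apply ind_eq_one; rw [pos_iff_r]; omega
  have i2 := ind_le_one (R.pos (ract x.w ⟨-1, -(2*u)⟩))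
  have i3 := ind_nonneg (R.pos ⟨1, 1+2*u⟩)
  have i4 := ind_le_one (R.pos (ract x.w ⟨1, 1+2*u⟩))
  constructor
  · nlinarith [i1, i2]
  · nlinarith [i3, i4]

end Bounds
section Mlemmas

lemma M1_false (x : WT) (hl : 0 < x.mu.l) (t t' : ℤ)
    (h : (⟨false, t⟩ : D) ∈ LP x) (h' : (⟨false, t'⟩ : D) ∈ LP x) :
    t' = t ∨ t' = t - 1 ∨ t' = t + 1 := by
  obtain ⟨a1, a2, -⟩ := LP_false_bounds x hl t _ rfl h
  obtain ⟨b1, b2, -⟩ := LP_false_bounds x hl t' _ rfl h'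
  by_contra hcon
  push_neg at hcon
  have hd : t' - t ≤ -2 ∨ 2 ≤ t' - t := by omega
  rcases hd with hd | hd
  · have : 2 * x.mu.l ≤ (t - t') * x.mu.l :=
      mul_le_mul_of_nonneg_right (by omega) hl.le
    nlinarith [a1, b2]
  · have : 2 * x.mu.l ≤ (t' - t) * x.mu.l :=
      mul_le_mul_of_nonneg_right (by omega) hl.le
    nlinarith [b1, a2]

lemma M1_true (x : WT) (hl : 0 < x.mu.l) (u u' : ℤ)
    (h : (⟨true, u⟩ : D) ∈ LP x) (h' : (⟨true, u'⟩ : D) ∈ LP x) :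
    u' = u ∨ u' = u - 1 ∨ u' = u + 1 := by
  obtain ⟨a1, a2, -⟩ := LP_true_bounds x hl u _ rfl h
  obtain ⟨b1, b2, -⟩ := LP_true_bounds x hl u' _ rfl h'
  by_contra hcon
  push_neg at hcon
  have hd : u' - u ≤ -2 ∨ 2 ≤ u' - u := by omega
  rcases hd with hd | hd
  · have : 2 * x.mu.l ≤ (u - u') * x.mu.l :=
      mul_le_mul_of_nonneg_right (by omega) hl.le
    nlinarith [a1, b2]
  · have : 2 * x.mu.l ≤ (u' - u) * x.mu.l :=
      mul_le_mul_of_nonneg_right (by omega) hl.le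
    nlinarith [b1, a2]

lemma M2_mixed (x : WT) (hl : 0 < x.mu.l) (t u : ℤ)
    (h : (⟨false, t⟩ : D) ∈ LP x) (h' : (⟨true, u⟩ : D) ∈ LP x) :
    u = -t ∨ u = -t - 1 := by
  obtain ⟨a1, a2, a3⟩ := LP_false_bounds x hl t _ rfl h
  obtain ⟨b1, b2, b3⟩ := LP_true_bounds x hl u _ rfl h'
  by_contra hcon
  push_neg at hcon
  have hd : t + u ≥ 1 ∨ t + u = -2 ∨ t + u ≤ -3 := by omega
  rcases hd with hd | hd | hd
  · have : 1 * x.mu.l ≤ (t + u) * x.mu.l :=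
      mul_le_mul_of_nonneg_right (by omega) hl.le
    nlinarith [a1, b1]
  · -- sum of the two windows forces l = 1 and boundary
    have hsum : (x.mu.k - t * x.mu.l) + (-x.mu.k - u * x.mu.l) = 2 * x.mu.l := by
      have : (t + u) * x.mu.l = (-2) * x.mu.l := by rw [hd]
      nlinarith [this]
    have hl1 : x.mu.l = 1 := by nlinarith [a2, b2, hsum, hl]
    have ha : 2 * (x.mu.k - t * x.mu.l) = x.mu.l + 1 := by nlinarith [a2, b2, hsum, hl1]
    have hb : 2 * (-x.mu.k - u * x.mu.l) = x.mu.l + 1 := by nlinarith [a2, b2, hsum, hl1]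
    have ht0 := a3 ha
    have hu0 := b3 hb
    omega
  · have : 3 * x.mu.l ≤ (-(t + u)) * x.mu.l :=
      mul_le_mul_of_nonneg_right (by omega) hl.le
    nlinarith [a2, b2]

lemma M5_down (x : WT) (hl : 0 < x.mu.l) (t : ℤ)
    (h : (⟨false, t⟩ : D) ∈ LP x) (h' : (⟨false, t - 1⟩ : D) ∈ LP x) :
    (⟨true, -t⟩ : D) ∈ LP x := by
  obtain ⟨a1, a2, a3⟩ := LP_false_bounds x hl t _ rfl h
  obtain ⟨b1, b2, b3⟩ := LP_false_bounds x hl (t-1) _ rfl h'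
  have hkey : x.mu.k - (t-1) * x.mu.l = (x.mu.k - t * x.mu.l) + x.mu.l := by ring
  have hl1 : x.mu.l = 1 := by nlinarith [a1, b2, hkey, hl]
  have hr0 : x.mu.k - t * x.mu.l = 0 := by nlinarith [a1, b2, hkey, hl1]
  have hb : 2 * (x.mu.k - (t-1) * x.mu.l) = x.mu.l + 1 := by nlinarith [hkey, hr0, hl1]
  have ht1 : 1 ≤ t := by have := b3 hb; omega
  apply LP_mem_true x (-t) hl1
  · nlinarith [hr0]
  · omega

lemma M4_up (x : WT) (hl : 0 < x.mu.l) (u : ℤ)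
    (h : (⟨true, u⟩ : D) ∈ LP x) (h' : (⟨true, u - 1⟩ : D) ∈ LP x) :
    (⟨false, -u⟩ : D) ∈ LP x := by
  obtain ⟨a1, a2, a3⟩ := LP_true_bounds x hl u _ rfl h
  obtain ⟨b1, b2, b3⟩ := LP_true_bounds x hl (u-1) _ rfl h'
  have hkey : -x.mu.k - (u-1) * x.mu.l = (-x.mu.k - u * x.mu.l) + x.mu.l := by ring
  have hl1 : x.mu.l = 1 := by nlinarith [a1, b2, hkey, hl]
  have hp0 : -x.mu.k - u * x.mu.l = 0 := by nlinarith [a1, b2, hkey, hl1]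
  have hb : 2 * (-x.mu.k - (u-1) * x.mu.l) = x.mu.l + 1 := by nlinarith [hkey, hp0, hl1]
  have hu1 : 1 ≤ u := by have := b3 hb; omega
  apply LP_mem_false x (-u) hl1
  · nlinarith [hp0]
  · omega

end Mlemmas
section Dmul

lemma dmul_f_s1 (t : ℤ) : dmul ⟨false, t⟩ s1 = ⟨true, -t⟩ := by
  simp [dmul, s1]

lemma dmul_f_s0 (t : ℤ) : dmul ⟨false, t⟩ s0 = ⟨true, -t - 1⟩ := by
  simp [dmul, s0]; ring

lemma dmul_t_s1 (u : ℤ) : dmul ⟨true, u⟩ s1 = ⟨false, -u⟩ := by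
  simp [dmul, s1]

lemma dmul_t_s0 (u : ℤ) : dmul ⟨true, u⟩ s0 = ⟨false, -u - 1⟩ := by
  simp [dmul, s0]; ring

lemma s1_ne_s0 : s1 ≠ s0 := by simp [s0, s1]

lemma s0_ne_s1 : s0 ≠ s1 := by simp [s0, s1]

end Dmul
section Conclude

lemma conclude3_ff (x : WT) (hl : 0 < x.mu.l) (t t' : ℤ) (z : D)
    (hne : t ≠ t') (hzf : z.eps = true)
    (h1 : (⟨false, t⟩ : D) ∈ LP x) (h2 : (⟨false, t'⟩ : D) ∈ LP x) (hz : z ∈ LP x)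
    (hsub : LP x ⊆ {⟨false, t⟩, ⟨false, t'⟩, z}) :
    ∃ w si sj : D, (si = s0 ∨ si = s1) ∧ (sj = s0 ∨ sj = s1) ∧ si ≠ sj ∧
      LP x = {w, dmul w si, dmul (dmul w si) sj} := by
  obtain ⟨εz, uz⟩ := z
  have hε : εz = true := hzf
  subst hε
  rcases M1_false x hl t t' h1 h2 with h | h | h
  · exact absurd h.symm hne
  · -- t' = t - 1
    subst h
    have hB := M5_down x hl t h1 h2
    have huz : uz = -t := by
      have := hsub hB; simp at this; omega
    subst huz
    refine ⟨⟨false, t⟩, s1, s0, Or.inr rfl, Or.inl rfl, s1_ne_s0, ?_⟩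
    rw [dmul_f_s1, dmul_t_s0, show (- -t - 1 : ℤ) = t - 1 by ring]
    apply Set.Subset.antisymm
    · intro d hd
      have := hsub hd
      simp only [Set.mem_insert_iff, Set.mem_singleton_iff] at this ⊢
      tauto
    · rintro d hd
      simp only [Set.mem_insert_iff, Set.mem_singleton_iff] at hd
      rcases hd with h | h | h
      · rw [h]; exact h1
      · rw [h]; exact hB
      · rw [h]; exact h2
  · -- t' = t + 1
    subst h
    have h1' : (⟨false, (t+1) - 1⟩ : D) ∈ LP x := by
      rw [show (t+1) - 1 = t by ring]; exact h1
    have hB := M5_down x hl (t+1) h2 h1'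
    have huz : uz = -(t+1) := by
      have := hsub hB; simp at this; omega
    subst huz
    refine ⟨⟨false, t+1⟩, s1, s0, Or.inr rfl, Or.inl rfl, s1_ne_s0, ?_⟩
    rw [dmul_f_s1, dmul_t_s0, show (- -(t+1) - 1 : ℤ) = t by ring]
    apply Set.Subset.antisymm
    · intro d hd
      have := hsub hd
      simp only [Set.mem_insert_iff, Set.mem_singleton_iff] at this ⊢
      tauto
    · rintro d hd
      simp only [Set.mem_insert_iff, Set.mem_singleton_iff] at hd
      rcases hd with h | h | h
      · rw [h]; exact h2
      · rw [h]; exact hB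
      · rw [h]; exact h1

lemma conclude3_tt (x : WT) (hl : 0 < x.mu.l) (u u' : ℤ) (z : D)
    (hne : u ≠ u') (hzf : z.eps = false)
    (h1 : (⟨true, u⟩ : D) ∈ LP x) (h2 : (⟨true, u'⟩ : D) ∈ LP x) (hz : z ∈ LP x)
    (hsub : LP x ⊆ {⟨true, u⟩, ⟨true, u'⟩, z}) :
    ∃ w si sj : D, (si = s0 ∨ si = s1) ∧ (sj = s0 ∨ sj = s1) ∧ si ≠ sj ∧
      LP x = {w, dmul w si, dmul (dmul w si) sj} := by
  obtain ⟨εz, tz⟩ := z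
  have hε : εz = false := hzf
  subst hε
  rcases M1_true x hl u u' h1 h2 with h | h | h
  · exact absurd h.symm hne
  · -- u' = u - 1
    subst h
    have hA := M4_up x hl u h1 h2
    have htz : tz = -u := by
      have := hsub hA; simp at this; omega
    subst htz
    refine ⟨⟨true, u - 1⟩, s0, s1, Or.inl rfl, Or.inr rfl, s0_ne_s1, ?_⟩
    rw [dmul_t_s0, show (-(u-1) - 1 : ℤ) = -u by ring, dmul_f_s1,
      show (- -u : ℤ) = u by ring]
    apply Set.Subset.antisymm
    · intro d hd
      have := hsub hd
      simp only [Set.mem_insert_iff, Set.mem_singleton_iff] at this ⊢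
      tauto
    · rintro d hd
      simp only [Set.mem_insert_iff, Set.mem_singleton_iff] at hd
      rcases hd with h | h | h
      · rw [h]; exact h2
      · rw [h]; exact hA
      · rw [h]; exact h1
  · -- u' = u + 1
    subst h
    have h1' : (⟨true, (u+1) - 1⟩ : D) ∈ LP x := by
      rw [show (u+1) - 1 = u by ring]; exact h1
    have hA := M4_up x hl (u+1) h2 h1'
    have htz : tz = -(u+1) := by
      have := hsub hA; simp at this; omega
    subst htz
    refine ⟨⟨true, u⟩, s0, s1, Or.inl rfl, Or.inr rfl, s0_ne_s1, ?_⟩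
    rw [dmul_t_s0, show (-u - 1 : ℤ) = -(u+1) by ring, dmul_f_s1,
      show (- -(u+1) : ℤ) = u + 1 by ring]
    apply Set.Subset.antisymm
    · intro d hd
      have := hsub hd
      simp only [Set.mem_insert_iff, Set.mem_singleton_iff] at this ⊢
      tauto
    · rintro d hd
      simp only [Set.mem_insert_iff, Set.mem_singleton_iff] at hd
      rcases hd with h | h | h
      · rw [h]; exact h1
      · rw [h]; exact hA
      · rw [h]; exact h2

end Conclude
/-- For `x ∈ W_T` (type affine SL₂) of positive level, the set `LP(x)` is connected
in `QBG(W)` by edges of the form `w → w sᵢ`: if `|LP(x)| = 2` then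
`LP(x) = {w, w sᵢ}` for some `w` and simple reflection `sᵢ`, and if `|LP(x)| = 3`
then `LP(x) = {w, w sᵢ, w sᵢ sⱼ}` with `i ≠ j`. -/
theorem statement_7 (x : WT) (hx : 0 < x.lev) :
    ((LP x).ncard = 2 →
      ∃ (w si : D), (si = s0 ∨ si = s1) ∧ LP x = {w, dmul w si}) ∧
    ((LP x).ncard = 3 →
      ∃ (w si sj : D), (si = s0 ∨ si = s1) ∧ (sj = s0 ∨ sj = s1) ∧ si ≠ sj ∧
        LP x = {w, dmul w si, dmul (dmul w si) sj}) := by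
  have hl : 0 < x.mu.l := hx
  constructor
  · -- ncard = 2
    intro h2
    obtain ⟨a, b, hab, hset⟩ := Set.ncard_eq_two.mp h2
    have ha : a ∈ LP x := by rw [hset]; exact Set.mem_insert _ _
    have hb : b ∈ LP x := by rw [hset]; exact Set.mem_insert_of_mem _ rfl
    obtain ⟨εa, ta⟩ := a
    obtain ⟨εb, tb⟩ := b
    cases εa <;> cases εb
    · -- both false
      exfalso
      have hne : ta ≠ tb := fun h => hab (by rw [h])
      rcases M1_false x hl ta tb ha hb with h | h | h
      · exact hne h.symm
      · subst h
        have hB := M5_down x hl ta ha hb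
        rw [hset] at hB; simp at hB
      · subst h
        have ha' : (⟨false, (ta+1) - 1⟩ : D) ∈ LP x := by
          rw [show (ta+1) - 1 = ta by ring]; exact ha
        have hB := M5_down x hl (ta+1) hb ha'
        rw [hset] at hB; simp at hB
    · -- a false, b true
      rcases M2_mixed x hl ta tb ha hb with h | h
      · subst h
        refine ⟨⟨false, ta⟩, s1, Or.inr rfl, ?_⟩
        rw [hset, dmul_f_s1]
      · subst h
        refine ⟨⟨false, ta⟩, s0, Or.inl rfl, ?_⟩
        rw [hset, dmul_f_s0]
    · -- a true, b false
      rcases M2_mixed x hl tb ta hb ha with h | h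
      · subst h
        refine ⟨⟨false, tb⟩, s1, Or.inr rfl, ?_⟩
        rw [hset, dmul_f_s1]
        exact Set.pair_comm _ _
      · subst h
        refine ⟨⟨false, tb⟩, s0, Or.inl rfl, ?_⟩
        rw [hset, dmul_f_s0]
        exact Set.pair_comm _ _
    · -- both true
      exfalso
      have hne : ta ≠ tb := fun h => hab (by rw [h])
      rcases M1_true x hl ta tb ha hb with h | h | h
      · exact hne h.symm
      · subst h
        have hA := M4_up x hl ta ha hb
        rw [hset] at hA; simp at hA
      · subst h
        have ha' : (⟨true, (ta+1) - 1⟩ : D) ∈ LP x := by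
          rw [show (ta+1) - 1 = ta by ring]; exact ha
        have hA := M4_up x hl (ta+1) hb ha'
        rw [hset] at hA; simp at hA
  · -- ncard = 3
    intro h3
    obtain ⟨a, b, c, hab, hac, hbc, hset⟩ := Set.ncard_eq_three.mp h3
    have ha : a ∈ LP x := by rw [hset]; simp
    have hb : b ∈ LP x := by rw [hset]; simp
    have hc : c ∈ LP x := by rw [hset]; simp
    obtain ⟨εa, ta⟩ := a
    obtain ⟨εb, tb⟩ := b
    obtain ⟨εc, tc⟩ := c
    cases εa <;> cases εb <;> cases εc
    · -- FFF
      exfalso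
      have h1 : ta ≠ tb := fun h => hab (by rw [h])
      have h2 : ta ≠ tc := fun h => hac (by rw [h])
      have h3 : tb ≠ tc := fun h => hbc (by rw [h])
      have m1 := M1_false x hl ta tb ha hb
      have m2 := M1_false x hl ta tc ha hc
      have m3 := M1_false x hl tb tc hb hc
      omega
    · -- FFT
      exact conclude3_ff x hl ta tb ⟨true, tc⟩ (fun h => hab (by rw [h])) rfl
        ha hb hc hset.le
    · -- FTF
      refine conclude3_ff x hl ta tc ⟨true, tb⟩ (fun h => hac (by rw [h])) rfl
        ha hc hb ?_
      intro d hd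
      rw [hset] at hd
      simp only [Set.mem_insert_iff, Set.mem_singleton_iff] at hd ⊢
      tauto
    · -- FTT
      refine conclude3_tt x hl tb tc ⟨false, ta⟩ (fun h => hbc (by rw [h])) rfl
        hb hc ha ?_
      intro d hd
      rw [hset] at hd
      simp only [Set.mem_insert_iff, Set.mem_singleton_iff] at hd ⊢
      tauto
    · -- TFF
      refine conclude3_ff x hl tb tc ⟨true, ta⟩ (fun h => hbc (by rw [h])) rfl
        hb hc ha ?_
      intro d hd
      rw [hset] at hd
      simp only [Set.mem_insert_iff, Set.mem_singleton_iff] at hd ⊢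
      tauto
    · -- TFT
      refine conclude3_tt x hl ta tc ⟨false, tb⟩ (fun h => hac (by rw [h])) rfl
        ha hc hb ?_
      intro d hd
      rw [hset] at hd
      simp only [Set.mem_insert_iff, Set.mem_singleton_iff] at hd ⊢
      tauto
    · -- TTF
      exact conclude3_tt x hl ta tb ⟨false, tc⟩ (fun h => hab (by rw [h])) rfl
        ha hb hc hset.le
    · -- TTT
      exfalso
      have h1 : ta ≠ tb := fun h => hab (by rw [h])
      have h2 : ta ≠ tc := fun h => hac (by rw [h])
      have h3 : tb ≠ tc := fun h => hbc (by rw [h])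
      have m1 := M1_true x hl ta tb ha hb
      have m2 := M1_true x hl ta tc ha hc
      have m3 := M1_true x hl tb tc hb hc
      omega

end SL2hat
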